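/- For every fixed w ∈ W, the per-user utility f_w satisfies the following diversification bound: for every nonempty subset S ⊆ W and every v ∈ W, setting α = min_{s∈S} D(o_s, o_v), it holds that f_w(S ∪ {v}) − f_w(S) ≤ α / |W|. -/
import Mathlib


open Finset

/-- The per-user utility function `f_w(S) = (1/|W|) · ( min_{x∈X} D(x, o_w) −
min_{p ∈ {o_s : s∈S} ∪ X} D(p, o_w) )`. -/
noncomputable def utilw {W M : Type*} [Fintype W] [DecidableEq M] [MetricSpace M]
    (o : W → M) (X : Finset M) (hX : X.Nonempty) (w : W) (S : Finset W) : ℝ :=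
  (1 / (Fintype.card W : ℝ)) *
    (X.inf' hX (fun x => dist x (o w)) -
      (S.image o ∪ X).inf' (hX.mono Finset.subset_union_right)
        (fun p => dist p (o w)))
/-- For every fixed `w ∈ W`, the per-user utility `f_w` satisfies the diversification
bound: for every nonempty subset `S ⊆ W` and every `v ∈ W`, setting
`α = min_{s∈S} D(o_s, o_v)`, it holds that `f_w(S ∪ {v}) − f_w(S) ≤ α / |W|`. -/
theorem utilw_diversification {W M : Type*} [Fintype W] [Nonempty W] [DecidableEq W]
    [DecidableEq M] [MetricSpace M]
    (o : W → M) (X : Finset M) (hX : X.Nonempty) (w : W)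
    (S : Finset W) (hS : S.Nonempty) (v : W) :
    utilw o X hX w (insert v S) - utilw o X hX w S ≤
      S.inf' hS (fun s => dist (o s) (o v)) / (Fintype.card W : ℝ) := by
  classical
  set n : ℝ := (Fintype.card W : ℝ) with hn
  have hnpos : (0 : ℝ) < n := by
    simp [hn, Fintype.card_pos]
  set α : ℝ := S.inf' hS (fun s => dist (o s) (o v)) with hα
  set A : ℝ := X.inf' hX (fun x => dist x (o w)) with hA
  set B : ℝ := (S.image o ∪ X).inf' (hX.mono Finset.subset_union_right)
      (fun p => dist p (o w)) with hB
  set C : ℝ := ((insert v S).image o ∪ X).inf' (hX.mono Finset.subset_union_right)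
      (fun p => dist p (o w)) with hC
  -- get s achieving α
  obtain ⟨s, hsS, hs⟩ := S.exists_mem_eq_inf' hS (fun s => dist (o s) (o v))
  -- B ≤ dist (o s) (o w)
  have hBle : B ≤ dist (o s) (o w) :=
    Finset.inf'_le _ (Finset.mem_union_left _ (Finset.mem_image_of_mem o hsS))
  -- key: B - α ≤ C
  have hkey : B - α ≤ C := by
    have hC' : C = min (dist (o v) (o w)) B := by
      rw [hC, hB]
      have : (insert v S).image o ∪ X = insert (o v) (S.image o ∪ X) := by
        rw [Finset.image_insert, Finset.insert_union]
      simp only [this]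
      rw [Finset.inf'_insert]
    rw [hC']
    refine le_min ?_ ?_
    · have : B ≤ dist (o s) (o v) + dist (o v) (o w) :=
        hBle.trans (dist_triangle _ _ _)
      have hαs : α = dist (o s) (o v) := hs
      linarith
    · have hα0 : 0 ≤ α := by
        rw [hα]
        exact Finset.le_inf' _ _ (fun b _ => dist_nonneg)
      linarith
  have hdiff : utilw o X hX w (insert v S) - utilw o X hX w S
      = (1 / n) * (B - C) := by
    simp only [utilw, ← hn, ← hA, ← hB, ← hC]
    ring
  rw [hdiff]
  calc (1 / n) * (B - C) ≤ (1 / n) * α :=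
        mul_le_mul_of_nonneg_left (by linarith) (by positivity)
    _ = α / n := one_div_mul_eq_div n α
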